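/- Let K be a field of characteristic zero and H ∈ K[x]ⁿ. If there exists j with 1 ≤ j ≤ r such that the Jacobian with respect to y⁽¹⁾ of (JH)|_{x=y⁽ʳ⁾} ··· (JH)|_{x=y⁽ʲ⁺¹⁾} · H(y⁽ʲ⁾ + H(··· + H(y⁽¹⁾)···)) vanishes, then (JH)|_{x=y⁽ʳ⁾}·(JH)|_{x=y⁽ʳ⁻¹⁾}···(JH)|_{x=y⁽¹⁾} = 0. -/

import Mathlib

open MvPolynomial

/-- Substitute the `i`-th fresh tuple of indeterminates for `x` in every entry of `M`. -/
noncomputable def substN {K : Type} [CommRing K] {n m : ℕ}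
    (M : Matrix (Fin m) (Fin m) (MvPolynomial (Fin n) K)) (i : ℕ) :
    Matrix (Fin m) (Fin m) (MvPolynomial (ℕ × Fin n) K) :=
  M.map (rename fun k => (i, k))

/-- The product `M|_{x=y⁽ʳ⁾} ⬝ ⋯ ⬝ M|_{x=y⁽¹⁾}` (fresh tuples indexed `r-1, …, 0`). -/
noncomputable def prodSubst {K : Type} [CommRing K] {n m : ℕ}
    (M : Matrix (Fin m) (Fin m) (MvPolynomial (Fin n) K)) (r : ℕ) :
    Matrix (Fin m) (Fin m) (MvPolynomial (ℕ × Fin n) K) :=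
  ((List.range r).reverse.map (substN M)).prod

/-- The Jacobian matrix `(∂H_i/∂x_j)` of a polynomial map `H`. -/
noncomputable def jac {K : Type} [CommRing K] {n : ℕ}
    (H : Fin n → MvPolynomial (Fin n) K) :
    Matrix (Fin n) (Fin n) (MvPolynomial (Fin n) K) :=
  Matrix.of fun i j => pderiv j (H i)

/-- The nested composition `H(y⁽ʲ⁾ + H(y⁽ʲ⁻¹⁾ + ⋯ + H(y⁽¹⁾)⋯))`,
with the fresh tuple `y⁽ⁱ⁾` realized as the variables `X (i-1, ·)`. -/
noncomputable def nest {K : Type} [CommRing K] {n : ℕ}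
    (H : Fin n → MvPolynomial (Fin n) K) : ℕ → Fin n → MvPolynomial (ℕ × Fin n) K
  | 0 => 0
  | j + 1 => fun i => aeval (fun k => X (j, k) + nest H j k) (H i)

/-- The product `(JH)|_{x=y⁽ʳ⁾} ⬝ ⋯ ⬝ (JH)|_{x=y⁽ʲ⁺¹⁾}` (fresh tuples indexed `r-1, …, j`). -/
noncomputable def tailProd {K : Type} [CommRing K] {n : ℕ}
    (H : Fin n → MvPolynomial (Fin n) K) (j r : ℕ) :
    Matrix (Fin n) (Fin n) (MvPolynomial (ℕ × Fin n) K) :=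
  (((List.range' j (r - j)).reverse).map (substN (jac H))).prod

/-!
The substitution `y⁽ⁱ⁾ ↦ y⁽ⁱ⁾ + H(y⁽ⁱ⁻¹⁾ + ⋯ + H(y⁽¹⁾)⋯)` for `i ≤ j` is triangular, hence an
injective endomorphism of the polynomial ring: it is a composite of shears, each inverted by the
opposite shear. It fixes the factors `(JH)|_{x=y⁽ⁱ⁾}` with `i > j` and turns the factors with
`i ≤ j` into `(JH)` evaluated at the nested arguments, so it maps the left hand side of the
conclusion to `T · P`, where `T` is the tail product in the hypothesis. By the chain rule `P` is
the Jacobian of `H(y⁽ʲ⁾ + ⋯ + H(y⁽¹⁾)⋯)` with respect to `y⁽¹⁾`, and `T` does not involve `y⁽¹⁾`,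
so `T · P` is the Jacobian in the hypothesis, which vanishes. Injectivity finishes the proof.
-/

namespace MvPolynomial
variable {σ τ R : Type*}

section CommSemiring
variable [CommSemiring R]

theorem pderiv_aeval [Fintype τ] (g : τ → MvPolynomial σ R) (x : σ) (p : MvPolynomial τ R) :
    pderiv x (aeval g p) = ∑ l, aeval g (pderiv l p) * pderiv x (g l) := by
  classical
  induction p using MvPolynomial.induction_on with
  | C a => simp
  | add p q hp hq => simp only [map_add, hp, hq, add_mul, Finset.sum_add_distrib]
  | mul_X p i hp =>
    simp only [map_mul, aeval_X, Derivation.leibniz, hp, smul_eq_mul, pderiv_X, map_add,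
      add_mul, Finset.sum_add_distrib, Finset.mul_sum, Pi.single_apply]
    simp [mul_comm, mul_left_comm]

theorem aeval_mem_supported {s : Set σ} (g : τ → MvPolynomial σ R) (hg : ∀ i, g i ∈ supported R s)
    (p : MvPolynomial τ R) : aeval g p ∈ supported R s := by
  have : aeval g p ∈ (aeval g).range := AlgHom.mem_range_self _ p
  rw [aeval_range] at this
  exact Algebra.adjoin_le (Set.range_subset_iff.2 hg) this

theorem aeval_eq_self_of_mem_supported {s : Set σ} {g : σ → MvPolynomial σ R}
    (hg : ∀ i ∈ s, g i = X i) {p : MvPolynomial σ R} (hp : p ∈ supported R s) :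
    aeval g p = p := by
  have : Set.EqOn (aeval g) (AlgHom.id R _) (X '' s) := by
    rintro _ ⟨i, hi, rfl⟩
    simp [hg i hi]
  exact AlgHom.eqOn_adjoin_iff.2 this hp

theorem pderiv_eq_zero_of_mem_supported {s : Set σ} {x : σ} (hx : x ∉ s) {p : MvPolynomial σ R}
    (hp : p ∈ supported R s) : pderiv x p = 0 :=
  pderiv_eq_zero_of_notMem_vars fun h => hx (mem_supported.1 hp h)

end CommSemiring

theorem aeval_X_add_injective [CommRing R] (c : σ → MvPolynomial σ R)
    (hc : ∀ i, aeval (fun j => X j - c j) (c i) = c i) :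
    Function.Injective (aeval (R := R) fun i => X i + c i) := by
  have : (aeval fun j => X j - c j).comp (aeval fun i => X i + c i) =
      AlgHom.id R (MvPolynomial σ R) := by
    refine algHom_ext fun i => ?_
    simp only [AlgHom.comp_apply, aeval_X, map_add, hc, sub_add_cancel, AlgHom.id_apply]
  intro p q h
  have h' := congrArg (aeval fun j => X j - c j) h
  rwa [← AlgHom.comp_apply, ← AlgHom.comp_apply, this, AlgHom.id_apply, AlgHom.id_apply] at h'

end MvPolynomial

section

variable {K : Type} [CommRing K] {n : ℕ} (H : Fin n → MvPolynomial (Fin n) K)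

theorem nest_mem_supported (j : ℕ) (i : Fin n) :
    nest H j i ∈ supported K {p : ℕ × Fin n | p.1 < j} := by
  induction j generalizing i with
  | zero => exact Subalgebra.zero_mem _
  | succ j ih =>
    refine aeval_mem_supported _ (fun k => add_mem ?_ ?_) (H i)
    · exact Algebra.subset_adjoin ⟨(j, k), Nat.lt_succ_self j, rfl⟩
    · refine supported_mono (s := {p : ℕ × Fin n | p.1 < j}) (fun p hp => ?_) (ih k)
      exact Nat.lt_succ_of_lt hp

theorem aeval_nest_of_forall_lt {g : ℕ × Fin n → MvPolynomial (ℕ × Fin n) K} {j : ℕ}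
    (hg : ∀ p : ℕ × Fin n, p.1 < j → g p = X p) (i : Fin n) :
    aeval g (nest H j i) = nest H j i :=
  aeval_eq_self_of_mem_supported hg (nest_mem_supported H j i)

noncomputable def shear (j : ℕ) : ℕ × Fin n → MvPolynomial (ℕ × Fin n) K :=
  fun p => X p + if p.1 < j then nest H p.1 p.2 else 0

noncomputable def shearStep (j : ℕ) : ℕ × Fin n → MvPolynomial (ℕ × Fin n) K :=
  fun p => X p + if p.1 = j then nest H j p.2 else 0

theorem aeval_shearStep_injective (j : ℕ) :
    Function.Injective (aeval (R := K) (shearStep H j)) := by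
  refine aeval_X_add_injective (fun p : ℕ × Fin n => if p.1 = j then nest H j p.2 else 0) ?_
  intro p
  split_ifs
  · exact aeval_nest_of_forall_lt H (fun q hq => by rw [if_neg hq.ne, sub_zero]) p.2
  · exact map_zero _

theorem aeval_shearStep_comp_aeval_shear (j : ℕ) :
    (aeval (shearStep H j)).comp (aeval (shear H j)) = aeval (R := K) (shear H (j + 1)) := by
  refine algHom_ext fun p => ?_
  rw [AlgHom.comp_apply, aeval_X, aeval_X]
  rcases lt_trichotomy p.1 j with hlt | heq | hgt
  · have hfix := aeval_nest_of_forall_lt H (g := shearStep H j) (j := p.1)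
      (fun q hq => by rw [shearStep, if_neg (hq.trans hlt).ne, add_zero]) p.2
    rw [shear, if_pos hlt, map_add, aeval_X, hfix, shearStep, if_neg hlt.ne, add_zero, shear,
      if_pos (Nat.lt_succ_of_lt hlt)]
  · rw [shear, if_neg heq.not_lt, add_zero, aeval_X, shearStep, if_pos heq, shear,
      if_pos (heq ▸ Nat.lt_succ_self j), heq]
  · rw [shear, if_neg (lt_asymm hgt), add_zero, aeval_X, shearStep, if_neg hgt.ne', add_zero,
      shear, if_neg (by omega), add_zero]

theorem aeval_shear_injective (j : ℕ) : Function.Injective (aeval (R := K) (shear H j)) := by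
  induction j with
  | zero =>
    have : shear H 0 = X := by ext1 p; simp [shear]
    rw [this, aeval_X_left]
    exact Function.injective_id
  | succ j ih =>
    rw [← aeval_shearStep_comp_aeval_shear]
    exact (aeval_shearStep_injective H j).comp ih

noncomputable def shiftJac (i : ℕ) : Matrix (Fin n) (Fin n) (MvPolynomial (ℕ × Fin n) K) :=
  (jac H).map (aeval fun k => X (i, k) + nest H i k)

noncomputable def headProd (j : ℕ) : Matrix (Fin n) (Fin n) (MvPolynomial (ℕ × Fin n) K) :=
  ((List.range j).reverse.map (shiftJac H)).prod

theorem headProd_succ (j : ℕ) : headProd H (j + 1) = shiftJac H j * headProd H j := by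
  simp [headProd, List.range_succ]

theorem pderiv_X_add_nest (j : ℕ) (m k : Fin n) :
    pderiv (0, k) (X (j, m) + nest H j m) = headProd H j m k := by
  induction j generalizing m with
  | zero =>
    simp [nest, headProd, pderiv_X, Pi.single_apply, Matrix.one_apply, eq_comm]
  | succ j ih =>
    rw [map_add, pderiv_X_of_ne (by simp), zero_add, headProd_succ, Matrix.mul_apply]
    change pderiv (0, k) (aeval (fun l => X (j, l) + nest H j l) (H m)) = _
    simp only [pderiv_aeval, ih]
    rfl

theorem substN_mem_matrix_supported {m : ℕ} (M : Matrix (Fin m) (Fin m) (MvPolynomial (Fin n) K))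
    (i : ℕ) : substN M i ∈ (supported K {p : ℕ × Fin n | p.1 = i}).matrix := by
  intro a b
  rw [substN, Matrix.map_apply, rename_eq_aeval]
  exact aeval_mem_supported _ (fun k => Algebra.subset_adjoin ⟨(i, k), rfl, rfl⟩) _

theorem tailProd_mem_matrix_supported (j r : ℕ) :
    tailProd H j r ∈ (supported K {p : ℕ × Fin n | j ≤ p.1}).matrix := by
  refine Subalgebra.list_prod_mem _ fun M hM => ?_
  obtain ⟨i, hi, rfl⟩ := List.mem_map.1 hM
  rw [List.mem_reverse, List.mem_range'_1] at hi
  have hsub : {p : ℕ × Fin n | p.1 = i} ⊆ {p | j ≤ p.1} := fun p (hp : p.1 = i) =>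
    show j ≤ p.1 by omega
  exact fun a b => supported_mono hsub (substN_mem_matrix_supported (jac H) i a b)

theorem pderiv_tailProd_mulVec_nest {j : ℕ} (hj : 1 ≤ j) (r : ℕ) (i k : Fin n) :
    pderiv (0, k) ((tailProd H j r).mulVec (nest H j) i) = (tailProd H j r * headProd H j) i k := by
  rw [Matrix.mulVec, dotProduct, map_sum, Matrix.mul_apply]
  refine Finset.sum_congr rfl fun m _ => ?_
  have hmem : tailProd H j r i m ∈ supported K {p : ℕ × Fin n | j ≤ p.1} :=
    tailProd_mem_matrix_supported H j r i m
  have htail : pderiv (0, k) (tailProd H j r i m) = 0 :=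
    pderiv_eq_zero_of_mem_supported (by simp; omega) hmem
  have hnest := pderiv_X_add_nest H j m k
  rw [map_add, pderiv_X_of_ne (by simp; omega), zero_add] at hnest
  rw [pderiv_mul, htail, hnest, zero_mul, zero_add]

theorem prodSubst_eq_tailProd_mul {j r : ℕ} (hjr : j ≤ r) :
    prodSubst (jac H) r = tailProd H j r * prodSubst (jac H) j := by
  have hsplit : List.range r = List.range j ++ List.range' j (r - j) := by
    simpa [List.range_eq_range', Nat.add_sub_cancel' hjr] using
      (List.range'_append_1 (s := 0) (m := j) (n := r - j)).symm
  rw [prodSubst, hsplit, List.reverse_append, List.map_append, List.prod_append, tailProd,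
    prodSubst]

theorem tailProd_map_aeval_shear (j r : ℕ) :
    (tailProd H j r).map (aeval (shear H j)) = tailProd H j r := by
  have hfix : ∀ p ∈ {p : ℕ × Fin n | j ≤ p.1}, shear H j p = X p := fun p (hp : j ≤ p.1) => by
    rw [shear, if_neg (by omega), add_zero]
  exact Matrix.ext fun a b =>
    aeval_eq_self_of_mem_supported hfix (tailProd_mem_matrix_supported H j r a b)

theorem prodSubst_map_aeval_shear (j : ℕ) :
    (prodSubst (jac H) j).map (aeval (shear H j)) = headProd H j := by
  rw [prodSubst, ← AlgHom.mapMatrix_apply, map_list_prod, List.map_map, headProd]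
  refine congrArg List.prod (List.map_congr_left fun i hi => ?_)
  rw [List.mem_reverse, List.mem_range] at hi
  refine Matrix.ext fun a b => ?_
  rw [Function.comp_apply, AlgHom.mapMatrix_apply, Matrix.map_apply, substN, Matrix.map_apply,
    aeval_rename, shiftJac, Matrix.map_apply]
  congr 2
  funext k
  simp [shear, hi]

end

theorem stmt6_general {K : Type} [Field K] {n r : ℕ}
    (H : Fin n → MvPolynomial (Fin n) K)
    (hex : ∃ j : ℕ, 1 ≤ j ∧ j ≤ r ∧ ∀ i : Fin n, ∀ k : Fin n,
      pderiv ((0 : ℕ), k) (((tailProd H j r).mulVec (nest H j)) i) = 0) :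
    prodSubst (jac H) r = 0 := by
  obtain ⟨j, hj, hjr, hyp⟩ := hex
  have hzero : tailProd H j r * headProd H j = 0 := Matrix.ext fun i k => by
    rw [← pderiv_tailProd_mulVec_nest H hj]
    exact hyp i k
  apply Matrix.map_injective (aeval_shear_injective H j)
  simp only [prodSubst_eq_tailProd_mul H hjr, Matrix.map_mul, tailProd_map_aeval_shear,
    prodSubst_map_aeval_shear, hzero, Matrix.map_zero, map_zero]

theorem stmt6 {K : Type} [Field K] [CharZero K] {n r : ℕ}
    (H : Fin n → MvPolynomial (Fin n) K)
    (hex : ∃ j : ℕ, 1 ≤ j ∧ j ≤ r ∧ ∀ i : Fin n, ∀ k : Fin n,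
      pderiv ((0 : ℕ), k) (((tailProd H j r).mulVec (nest H j)) i) = 0) :
    prodSubst (jac H) r = 0 :=
  stmt6_general H hex
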